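/- The Magnus ordering on the free group Fₙ, defined by a <_M b iff the first (in DegLex order on monomials) coefficient at which the Magnus expansions μ(a) and μ(b) differ is smaller in μ(a) than in μ(b), is a bi-invariant total order on Fₙ. -/

import Mathlib

/-!
`a <_M b` says that the coefficient function of `μ a` is smaller than that of `μ b` in the
lexicographic order on functions `List (Fin n) → ℤ`, with words indexed in DegLex order. DegLex
is a well-order, so this lexicographic order is a strict total order, and it pulls back to one
along `μ` because `μ` is injective: a nontrivial element is a reduced product of
syllables `x_{i₁}^{e₁} ⋯ x_{i_k}^{e_k}` (`i_j ≠ i_{j+1}`, `e_j ≠ 0`), and its image has the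
coefficient `e₁ ⋯ e_k ≠ 0` at `X_{i₁} ⋯ X_{i_k}`. Bi-invariance holds because every `μ c` has
constant term `1`, and the coefficient of `μ c * f` (or `f * μ c`) at `w` is `f w` plus terms
involving only coefficients of `f` at shorter words.
-/

noncomputable section

/-- The algebra of noncommutative formal power series in variables `X 0, …, X (n-1)`
over `R`: a series is given by its coefficients, indexed by noncommutative
monomials, i.e. words in the `n` variables. -/
def NCSeries (n : ℕ) (R : Type*) := List (Fin n) → R

namespace NCSeries

variable {n : ℕ} {R : Type*} [CommRing R]

instance : AddCommGroup (NCSeries n R) := Pi.addCommGroup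
instance : Module R (NCSeries n R) := Pi.module _ _ _

instance : One (NCSeries n R) := ⟨fun w => if w = [] then 1 else 0⟩

/-- Cauchy/convolution product of noncommutative power series. -/
instance : Mul (NCSeries n R) :=
  ⟨fun f g w => ∑ i ∈ Finset.range (w.length + 1), f (w.take i) * g (w.drop i)⟩

theorem mul_def (f g : NCSeries n R) (w : List (Fin n)) :
    (f * g) w = ∑ i ∈ Finset.range (w.length + 1), f (w.take i) * g (w.drop i) := rfl

theorem one_def (w : List (Fin n)) : (1 : NCSeries n R) w = if w = [] then 1 else 0 := rfl

theorem add_def (f g : NCSeries n R) (w : List (Fin n)) : (f + g) w = f w + g w := rfl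

private theorem one_mul' (f : NCSeries n R) : 1 * f = f := by
  funext w
  rw [mul_def]
  rw [Finset.sum_eq_single_of_mem 0 (Finset.mem_range.2 (Nat.succ_pos _))]
  · simp [one_def]
  · intro b hb hb0
    have : w.take b ≠ [] := by
      intro hcon
      rcases List.take_eq_nil_iff.1 hcon with rfl | rfl
      · exact hb0 rfl
      · simp only [List.length_nil, Nat.succ_eq_add_one, Finset.mem_range] at hb; omega
    rw [one_def, if_neg this, zero_mul]

private theorem mul_one' (f : NCSeries n R) : f * 1 = f := by
  funext w
  rw [mul_def]
  rw [Finset.sum_eq_single_of_mem w.length (Finset.mem_range.2 (Nat.lt_succ_self _))]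
  · simp [one_def]
  · intro b hb hb0
    have : w.drop b ≠ [] := by
      intro hcon
      rw [List.drop_eq_nil_iff] at hcon
      simp only [Nat.succ_eq_add_one, Finset.mem_range] at hb; omega
    rw [one_def, if_neg this, mul_zero]

private theorem key_reindex (L : ℕ) (T : ℕ → ℕ → R) :
    ∑ i ∈ Finset.range (L + 1), ∑ j ∈ Finset.range (i + 1), T j (i - j) =
      ∑ j ∈ Finset.range (L + 1), ∑ m ∈ Finset.range (L - j + 1), T j m := by
  rw [Finset.sum_sigma', Finset.sum_sigma']
  refine Finset.sum_nbij' (fun p => (⟨p.2, p.1 - p.2⟩ : Σ _ : ℕ, ℕ))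
    (fun p => (⟨p.1 + p.2, p.1⟩ : Σ _ : ℕ, ℕ)) ?_ ?_ ?_ ?_ ?_
  · rintro ⟨i, j⟩ h
    simp only [Finset.mem_sigma, Finset.mem_range] at h ⊢
    omega
  · rintro ⟨j, m⟩ h
    simp only [Finset.mem_sigma, Finset.mem_range] at h ⊢
    omega
  · rintro ⟨i, j⟩ h
    simp only [Finset.mem_sigma, Finset.mem_range] at h
    simp only [Sigma.mk.inj_iff]
    exact ⟨by omega, HEq.rfl⟩
  · rintro ⟨j, m⟩ h
    simp only [Finset.mem_sigma, Finset.mem_range] at h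
    have hm : j + m - j = m := by omega
    simp [Sigma.mk.inj_iff, hm]
  · rintro ⟨i, j⟩ h
    rfl

private theorem mul_assoc' (f g h : NCSeries n R) : f * g * h = f * (g * h) := by
  funext w
  rw [mul_def (f * g) h, mul_def f (g * h)]
  have step1 : ∑ i ∈ Finset.range (w.length + 1), (f * g) (w.take i) * h (w.drop i) =
      ∑ i ∈ Finset.range (w.length + 1), ∑ j ∈ Finset.range (i + 1),
        f (w.take j) * (g ((w.drop j).take (i - j)) * h ((w.drop j).drop (i - j))) := by
    refine Finset.sum_congr rfl ?_
    intro i hi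
    rw [Finset.mem_range] at hi
    rw [mul_def, Finset.sum_mul]
    have hlen : (w.take i).length = i := by
      rw [List.length_take]; omega
    rw [hlen]
    refine Finset.sum_congr rfl ?_
    intro j hj
    rw [Finset.mem_range] at hj
    rw [List.take_take, min_eq_left (by omega : j ≤ i), List.drop_take,
      List.drop_drop]
    have : j + (i - j) = i := by omega
    rw [this, mul_assoc]
  have step2 : ∑ j ∈ Finset.range (w.length + 1), f (w.take j) * (g * h) (w.drop j) =
      ∑ j ∈ Finset.range (w.length + 1), ∑ m ∈ Finset.range (w.length - j + 1),
        f (w.take j) * (g ((w.drop j).take m) * h ((w.drop j).drop m)) := by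
    refine Finset.sum_congr rfl ?_
    intro j hj
    rw [Finset.mem_range] at hj
    rw [mul_def, Finset.mul_sum, List.length_drop]
  rw [step1, step2,
    key_reindex w.length
      (fun j m => f (w.take j) * (g ((w.drop j).take m) * h ((w.drop j).drop m)))]

instance instRing : Ring (NCSeries n R) :=
  { (inferInstance : AddCommGroup (NCSeries n R)),
    (inferInstance : One (NCSeries n R)),
    (inferInstance : Mul (NCSeries n R)) with
    mul_assoc := mul_assoc'
    one_mul := one_mul'
    mul_one := mul_one'
    left_distrib := by
      intro a b c
      funext w
      simp only [mul_def, add_def, mul_add, Finset.sum_add_distrib]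
    right_distrib := by
      intro a b c
      funext w
      simp only [mul_def, add_def, add_mul, Finset.sum_add_distrib]
    zero_mul := by
      intro a
      funext w
      simp only [mul_def]
      simp [show ∀ u, (0 : NCSeries n R) u = 0 from fun _ => rfl]
    mul_zero := by
      intro a
      funext w
      simp only [mul_def]
      simp [show ∀ u, (0 : NCSeries n R) u = 0 from fun _ => rfl] }

/-- The variable `Xᵢ`, as a noncommutative power series. -/
def X (i : Fin n) : NCSeries n R := fun w => if w = [i] then 1 else 0

/-- The geometric series `∑ (-1)^k Xᵢ^k`, the inverse of `1 + Xᵢ`. -/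
def geom (i : Fin n) : NCSeries n R :=
  fun w => if ∀ a ∈ w, a = i then (-1) ^ w.length else 0

theorem geom_nil (i : Fin n) : geom (R := R) i [] = 1 := by
  rw [geom, if_pos (by simp)]
  simp

theorem geom_cons_self (i : Fin n) (t : List (Fin n)) :
    geom (R := R) i (i :: t) = -(geom i t) := by
  by_cases ht : ∀ a ∈ t, a = i
  · have h2 : ∀ a ∈ (i :: t), a = i := by
      intro a ha
      rcases List.mem_cons.1 ha with rfl | ha'
      · rfl
      · exact ht a ha'
    rw [geom, geom, if_pos h2, if_pos ht, List.length_cons, pow_succ]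
    ring
  · have h2 : ¬ ∀ a ∈ (i :: t), a = i :=
      fun hc => ht fun a ha => hc a (List.mem_cons_of_mem _ ha)
    rw [geom, geom, if_neg h2, if_neg ht, neg_zero]

theorem geom_cons_ne {i a : Fin n} (t : List (Fin n)) (hai : a ≠ i) :
    geom (R := R) i (a :: t) = 0 := by
  rw [geom, if_neg]
  intro hc
  exact hai (hc a List.mem_cons_self)

theorem geom_concat_self (i : Fin n) (t : List (Fin n)) :
    geom (R := R) i (t ++ [i]) = -(geom i t) := by
  by_cases ht : ∀ a ∈ t, a = i
  · have h2 : ∀ a ∈ t ++ [i], a = i := by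
      intro a ha
      rcases List.mem_append.1 ha with ha' | ha'
      · exact ht a ha'
      · simpa using ha'
    rw [geom, geom, if_pos h2, if_pos ht, List.length_append]
    simp [pow_succ]
  · have h2 : ¬ ∀ a ∈ t ++ [i], a = i :=
      fun hc => ht fun a ha => hc a (List.mem_append_left _ ha)
    rw [geom, geom, if_neg h2, if_neg ht, neg_zero]

theorem geom_concat_ne {i a : Fin n} (t : List (Fin n)) (hai : a ≠ i) :
    geom (R := R) i (t ++ [a]) = 0 := by
  rw [geom, if_neg]
  intro hc
  exact hai (hc a (List.mem_append_right _ (by simp)))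

theorem oneAddX_apply (i : Fin n) (w : List (Fin n)) :
    (1 + X i : NCSeries n R) w
      = (if w = [] then 1 else 0) + (if w = [i] then 1 else 0) := rfl

private theorem oneAddX_mul_geom (i : Fin n) :
    (1 + X i : NCSeries n R) * geom i = 1 := by
  funext w
  cases w with
  | nil =>
    rw [mul_def]
    simp [oneAddX_apply, geom_nil, one_def]
  | cons a t =>
    rw [mul_def]
    simp only [List.length_cons]
    rw [Finset.sum_range_succ' _ (t.length + 1)]
    have h0 : (1 + X i : NCSeries n R) ((a :: t).take 0) * geom i ((a :: t).drop 0)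
        = geom i (a :: t) := by
      simp [oneAddX_apply]
    rw [h0]
    have hrest : ∑ k ∈ Finset.range (t.length + 1),
        (1 + X i : NCSeries n R) ((a :: t).take (k + 1)) * geom i ((a :: t).drop (k + 1))
        = (if a = i then (1 : R) else 0) * geom i t := by
      rw [Finset.sum_eq_single_of_mem 0 (Finset.mem_range.2 (Nat.succ_pos _))]
      · simp only [List.take_succ_cons, List.take_zero, List.drop_succ_cons, List.drop_zero]
        rw [oneAddX_apply]
        by_cases hai : a = i
        · subst hai; simp
        · simp [hai, List.cons_eq_cons]
      · intro b hb hb0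
        rw [Finset.mem_range] at hb
        simp only [List.take_succ_cons, List.drop_succ_cons]
        have h1 : (a :: t.take b : List (Fin n)) ≠ [] := by simp
        have h2 : (a :: t.take b : List (Fin n)) ≠ [i] := by
          intro hcon
          rw [List.cons_eq_cons] at hcon
          have h3 : t.take b = [] := hcon.2
          rcases List.take_eq_nil_iff.1 h3 with h4 | h4
          · exact hb0 h4
          · rw [h4] at hb; simp at hb; omega
        rw [oneAddX_apply, if_neg h1, if_neg h2, add_zero, zero_mul]
    rw [hrest, one_def, if_neg (by simp : ¬(a :: t : List (Fin n)) = [])]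
    by_cases hai : a = i
    · subst hai
      rw [if_pos rfl, one_mul, geom_cons_self]
      ring
    · rw [if_neg hai, zero_mul, geom_cons_ne t hai, add_zero]

private theorem geom_mul_oneAddX (i : Fin n) :
    geom i * (1 + X i : NCSeries n R) = 1 := by
  funext w
  rcases List.eq_nil_or_concat w with rfl | ⟨t, a, rfl⟩
  · rw [mul_def]
    simp [oneAddX_apply, geom_nil, one_def]
  · rw [List.concat_eq_append, mul_def]
    have hL : (t ++ [a]).length = t.length + 1 := by simp
    rw [hL, Finset.sum_range_succ, Finset.sum_range_succ]
    have hlast : geom i ((t ++ [a]).take (t.length + 1)) *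
        (1 + X i : NCSeries n R) ((t ++ [a]).drop (t.length + 1)) = geom i (t ++ [a]) := by
      have h1 : (t ++ [a]).take (t.length + 1) = t ++ [a] := by
        rw [← hL, List.take_length]
      have h2 : (t ++ [a]).drop (t.length + 1) = [] := by
        rw [← hL, List.drop_length]
      rw [h1, h2, oneAddX_apply]
      simp
    have hsnd : geom i ((t ++ [a]).take t.length) *
        (1 + X i : NCSeries n R) ((t ++ [a]).drop t.length)
        = geom i t * (if a = i then (1 : R) else 0) := by
      have h1 : (t ++ [a]).take t.length = t := by
        rw [List.take_left]
      have h2 : (t ++ [a]).drop t.length = [a] := by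
        rw [List.drop_left]
      rw [h1, h2, oneAddX_apply]
      by_cases hai : a = i
      · subst hai; simp
      · simp [hai, List.cons_eq_cons]
    have hrest : ∑ k ∈ Finset.range t.length,
        geom i ((t ++ [a]).take k) * (1 + X i : NCSeries n R) ((t ++ [a]).drop k) = 0 := by
      refine Finset.sum_eq_zero ?_
      intro k hk
      rw [Finset.mem_range] at hk
      have hlen : ((t ++ [a]).drop k).length = t.length + 1 - k := by
        rw [List.length_drop, hL]
      have h1 : (t ++ [a]).drop k ≠ [] := by
        intro hcon; rw [hcon] at hlen; simp at hlen; omega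
      have h2 : (t ++ [a]).drop k ≠ [i] := by
        intro hcon; rw [hcon] at hlen; simp at hlen; omega
      rw [oneAddX_apply, if_neg h1, if_neg h2, add_zero, mul_zero]
    rw [hrest, hsnd, hlast, one_def, if_neg (by simp : ¬(t ++ [a] : List (Fin n)) = [])]
    by_cases hai : a = i
    · subst hai
      rw [if_pos rfl, mul_one, geom_concat_self]
      ring
    · rw [if_neg hai, mul_zero, geom_concat_ne t hai]
      simp

/-- `1 + Xᵢ` as a unit of the power series ring, with inverse the geometric
series `1 - Xᵢ + Xᵢ² - ⋯`. -/
def magnusUnit (i : Fin n) : (NCSeries n R)ˣ :=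
  ⟨1 + X i, geom i, oneAddX_mul_geom i, geom_mul_oneAddX i⟩

end NCSeries

/-- The Magnus expansion: the homomorphism from the free group on `n` generators
into the (multiplicative monoid of the) ring of noncommutative formal power
series, determined by `xᵢ ↦ 1 + Xᵢ`. -/
def magnus (n : ℕ) (R : Type*) [CommRing R] : FreeGroup (Fin n) →* NCSeries n R :=
  (Units.coeHom (NCSeries n R)).comp (FreeGroup.lift NCSeries.magnusUnit)


/-- The DegLex ordering on noncommutative monomials (words): compare first by
degree (length), then lexicographically by the index sequence. -/
def NCDegLex {n : ℕ} (w w' : List (Fin n)) : Prop :=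
  w.length < w'.length ∨ (w.length = w'.length ∧ List.Lex (· < ·) w w')

/-- A bi-invariant total order (bi-ordering) on a group `G`. -/
def IsBiOrdering {G : Type*} [Group G] (r : G → G → Prop) : Prop :=
  IsStrictTotalOrder G r ∧ ∀ a b c : G, r a b → r (c * a) (c * b) ∧ r (a * c) (b * c)

/-- The Magnus ordering on the free group: `a <_M b` iff at the DegLex-first
monomial where the Magnus expansions `μ a` and `μ b` differ, the coefficient of
`μ a` is smaller than that of `μ b`. -/
def magnusLt {n : ℕ} (a b : FreeGroup (Fin n)) : Prop :=
  ∃ w : List (Fin n), magnus n ℤ a w < magnus n ℤ b w ∧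
    ∀ w' : List (Fin n), NCDegLex w' w → magnus n ℤ a w' = magnus n ℤ b w'


section DegLex

variable {n : ℕ}

theorem ncDegLex_eq_shortlex : @NCDegLex n = List.Shortlex (· < ·) := by
  ext w w'
  exact List.shortlex_def.symm

theorem ncDegLex_eq_onFun_toLex :
    @NCDegLex n = Function.onFun (· < · : ℕ ×ₗ List (Fin n) → _ → Prop)
      fun w => toLex (w.length, w) := by
  ext w w'
  exact (Prod.Lex.toLex_lt_toLex (x := (w.length, w)) (y := (w'.length, w'))).symm

instance : IsStrictTotalOrder (List (Fin n)) NCDegLex :=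
  ncDegLex_eq_onFun_toLex ▸ Function.Injective.isStrictTotalOrder_onFun _
    fun _ _ h => congrArg Prod.snd (toLex.injective h)

theorem wellFounded_ncDegLex : WellFounded (@NCDegLex n) :=
  ncDegLex_eq_shortlex ▸ List.Shortlex.wf wellFounded_lt

end DegLex

theorem Pi.isStrictTotalOrder_lex {ι : Type*} {β : ι → Type*} {r : ι → ι → Prop}
    [IsTrans ι r] [Std.Trichotomous r] (hwf : WellFounded r) [∀ i, LinearOrder (β i)] :
    IsStrictTotalOrder (∀ i, β i) (Pi.Lex r (· < ·)) where
  toTrichotomous := Pi.trichotomous_lex r _ hwf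
  irrefl _ := fun ⟨_, _, h⟩ => lt_irrefl _ h
  trans := by
    rintro a b c ⟨i, hab, hi⟩ ⟨j, hbc, hj⟩
    rcases trichotomous_of r i j with h | rfl | h
    · exact ⟨i, fun k hk => (hab k hk).trans (hbc k (_root_.trans hk h)), hbc i h ▸ hi⟩
    · exact ⟨i, fun k hk => (hab k hk).trans (hbc k hk), hi.trans hj⟩
    · exact ⟨j, fun k hk => (hab k (_root_.trans hk h)).trans (hbc k hk),
        (hab j h).symm ▸ hj⟩

theorem FreeGroup.lift_const_eq_zpow {G : Type*} [Group G] (x : G) (g : FreeGroup Unit) :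
    FreeGroup.lift (fun _ => x) g = x ^ FreeGroup.equivIntOfUnique g := by
  conv_lhs => rw [← FreeGroup.equivIntOfUnique.symm_apply_apply g]
  simp [FreeGroup.equivIntOfUnique]

theorem FreeGroup.equivIntOfUnique_ne_zero {g : FreeGroup Unit} (hg : g ≠ 1) :
    FreeGroup.equivIntOfUnique g ≠ 0 := by
  intro h
  rw [← FreeGroup.equivIntOfUnique.symm_apply_apply g, h] at hg
  exact hg (zpow_zero _)

open Monoid in
theorem freeGroupEquivCoprodI_symm_word_prod {ι : Type*}
    (w : CoprodI.Word fun _ : ι => FreeGroup Unit) :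
    freeGroupEquivCoprodI.symm w.prod =
      (w.toList.map fun l => FreeGroup.of l.1 ^ FreeGroup.equivIntOfUnique l.2).prod := by
  simp [CoprodI.Word.prod, map_list_prod, Function.comp_def, FreeGroup.lift_const_eq_zpow]

namespace NCSeries

variable {n : ℕ} {R : Type*}

section CommRing

variable [CommRing R]

def constCoeff : NCSeries n R →* R where
  toFun f := f []
  map_one' := if_pos rfl
  map_mul' f g := by simp [mul_def]

theorem mul_apply_singleton (f g : NCSeries n R) (i : Fin n) :
    (f * g) [i] = f [] * g [i] + f [i] * g [] := by
  simp [mul_def, Finset.sum_range_succ]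

theorem mul_apply_sub_mul_apply_left (c : NCSeries n R) {f g : NCSeries n R} {w : List (Fin n)}
    (h : ∀ v : List (Fin n), v.length < w.length → f v = g v) :
    (c * f) w - (c * g) w = c [] * (f w - g w) := by
  rw [mul_def, mul_def, ← Finset.sum_sub_distrib, Finset.sum_range_succ',
    Finset.sum_eq_zero fun k hk => ?_, zero_add, List.take_zero, List.drop_zero, mul_sub]
  rw [h _ (by simp at hk ⊢; omega), sub_self]

theorem mul_apply_sub_mul_apply_right (c : NCSeries n R) {f g : NCSeries n R} {w : List (Fin n)}
    (h : ∀ v : List (Fin n), v.length < w.length → f v = g v) :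
    (f * c) w - (g * c) w = (f w - g w) * c [] := by
  rw [mul_def, mul_def, ← Finset.sum_sub_distrib, Finset.sum_range_succ,
    Finset.sum_eq_zero fun k hk => ?_, zero_add, List.take_length, List.drop_length, sub_mul]
  rw [h _ (by simp at hk ⊢; omega), sub_self]

def IsSeriesIn (i : Fin n) (f : NCSeries n R) : Prop :=
  ∀ w : List (Fin n), (∃ a ∈ w, a ≠ i) → f w = 0

theorem IsSeriesIn.mul {i : Fin n} {f g : NCSeries n R} (hf : IsSeriesIn i f)
    (hg : IsSeriesIn i g) : IsSeriesIn i (f * g) := by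
  rintro w ⟨a, ha, hai⟩
  refine Finset.sum_eq_zero fun k _ => ?_
  rw [← List.take_append_drop k w, List.mem_append] at ha
  rcases ha with ha | ha
  · rw [hf _ ⟨a, ha, hai⟩, zero_mul]
  · rw [hg _ ⟨a, ha, hai⟩, mul_zero]

theorem isSeriesIn_one (i : Fin n) : IsSeriesIn i (1 : NCSeries n R) := by
  rintro w ⟨a, ha, -⟩
  rw [one_def, if_neg (List.ne_nil_of_mem ha)]

theorem isSeriesIn_one_add_X (i : Fin n) : IsSeriesIn i (1 + X i : NCSeries n R) := by
  rintro w ⟨a, ha, hai⟩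
  rw [oneAddX_apply, if_neg (List.ne_nil_of_mem ha), if_neg (by rintro rfl; simp_all), add_zero]

theorem isSeriesIn_geom (i : Fin n) : IsSeriesIn i (geom i : NCSeries n R) :=
  fun _ ⟨a, ha, hai⟩ => if_neg fun h => hai (h a ha)

/-- Any prefix of `a :: v` longer than `[a]` contains two distinct letters, so only the first
two terms of the product formula survive. -/
theorem mul_apply_cons {i : Fin n} {f : NCSeries n R} (hf : IsSeriesIn i f) (g : NCSeries n R)
    {a : Fin n} {v : List (Fin n)} (hv : (a :: v).IsChain (· ≠ ·)) :
    (f * g) (a :: v) = f [] * g (a :: v) + f [a] * g v := by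
  rw [mul_def, List.length_cons, Finset.sum_range_succ', Finset.sum_range_succ',
    Finset.sum_eq_zero fun k hk => ?_]
  · simp [add_comm]
  cases v with
  | nil => simp at hk
  | cons b v =>
    have hab : a ≠ b := (List.isChain_cons_cons.1 hv).1
    have : ∃ c ∈ (a :: b :: v).take (k + 1 + 1), c ≠ i := by
      by_cases hai : a = i
      · exact ⟨b, by simp, fun hbi => hab (hai.trans hbi.symm)⟩
      · exact ⟨a, by simp, hai⟩
    rw [hf _ this, zero_mul]

theorem list_prod_apply_eq_zero {fs : List (NCSeries n R)} (hfs : ∀ f ∈ fs, ∃ i, IsSeriesIn i f)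
    {u : List (Fin n)} (hu : u.IsChain (· ≠ ·)) (hlen : fs.length < u.length) :
    fs.prod u = 0 := by
  induction fs generalizing u with
  | nil =>
    rw [List.prod_nil, one_def, if_neg (List.ne_nil_of_length_pos (by simpa using hlen))]
  | cons f fs ih =>
    obtain ⟨i, hf⟩ := hfs f List.mem_cons_self
    have hfs' := fun g hg => hfs g (List.mem_cons_of_mem f hg)
    obtain _ | ⟨a, v⟩ := u
    · simp at hlen
    rw [List.prod_cons, mul_apply_cons hf _ hu, ih hfs' hu (by simp at hlen ⊢; omega),
      ih hfs' (u := v) hu.tail (by simp at hlen ⊢; omega), mul_zero, mul_zero, add_zero]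

theorem list_prod_apply_map {α : Type*} (L : List α) (idx : α → Fin n) (f : α → NCSeries n R)
    (hf : ∀ x ∈ L, IsSeriesIn (idx x) (f x)) (hL : (L.map idx).IsChain (· ≠ ·)) :
    (L.map f).prod (L.map idx) = (L.map fun x => f x [idx x]).prod := by
  induction L with
  | nil => simp [one_def]
  | cons x L ih =>
    have hf' := fun y hy => hf y (List.mem_cons_of_mem x hy)
    have hfs : ∀ g ∈ L.map f, ∃ i, IsSeriesIn i g := by
      simp only [List.mem_map]
      rintro _ ⟨y, hy, rfl⟩
      exact ⟨_, hf' y hy⟩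
    rw [List.map_cons] at hL
    rw [List.map_cons, List.prod_cons, List.map_cons,
      mul_apply_cons (hf x List.mem_cons_self) _ hL, list_prod_apply_eq_zero hfs hL (by simp),
      ih hf' hL.tail]
    simp

end CommRing

section Ordered

variable [CommRing R] [LinearOrder R] [IsStrictOrderedRing R]

theorem lex_mul_left {c f g : NCSeries n R} (hc : 0 < c [])
    (h : Pi.Lex NCDegLex (· < ·) f g) : Pi.Lex NCDegLex (· < ·) (c * f) (c * g) := by
  obtain ⟨w, hagree, hlt⟩ := h
  refine ⟨w, fun v hv => ?_, ?_⟩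
  · rw [← sub_eq_zero,
      mul_apply_sub_mul_apply_left c fun u hu => hagree u (_root_.trans (Or.inl hu) hv),
      hagree v hv, sub_self, mul_zero]
  · show (c * f) w < (c * g) w
    rw [← sub_neg, mul_apply_sub_mul_apply_left c fun u hu => hagree u (Or.inl hu)]
    exact mul_neg_of_pos_of_neg hc (sub_neg.2 hlt)

theorem lex_mul_right {c f g : NCSeries n R} (hc : 0 < c [])
    (h : Pi.Lex NCDegLex (· < ·) f g) : Pi.Lex NCDegLex (· < ·) (f * c) (g * c) := by
  obtain ⟨w, hagree, hlt⟩ := h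
  refine ⟨w, fun v hv => ?_, ?_⟩
  · rw [← sub_eq_zero,
      mul_apply_sub_mul_apply_right c fun u hu => hagree u (_root_.trans (Or.inl hu) hv),
      hagree v hv, sub_self, zero_mul]
  · show (f * c) w < (g * c) w
    rw [← sub_neg, mul_apply_sub_mul_apply_right c fun u hu => hagree u (Or.inl hu)]
    exact mul_neg_of_neg_of_pos (sub_neg.2 hlt) hc

end Ordered

end NCSeries

section Magnus

open NCSeries

variable {n : ℕ} {R : Type*} [CommRing R]

theorem magnus_of (i : Fin n) : magnus n R (FreeGroup.of i) = 1 + X i := by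
  simp [magnus, magnusUnit]

theorem magnus_of_inv (i : Fin n) : magnus n R (FreeGroup.of i)⁻¹ = geom i := by
  simp [magnus, magnusUnit]

theorem magnus_apply_nil (g : FreeGroup (Fin n)) : magnus n R g [] = 1 :=
  DFunLike.congr_fun (FreeGroup.ext_hom (constCoeff.comp (magnus n R)) 1 fun i => by
    simp [constCoeff, magnus_of, oneAddX_apply]) g

theorem magnus_mul_apply_singleton (a b : FreeGroup (Fin n)) (i : Fin n) :
    magnus n R (a * b) [i] = magnus n R a [i] + magnus n R b [i] := by
  rw [map_mul, mul_apply_singleton, magnus_apply_nil, magnus_apply_nil, one_mul, mul_one,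
    add_comm]

theorem magnus_zpow_of_apply_singleton (i : Fin n) (k : ℤ) :
    magnus n R (FreeGroup.of i ^ k) [i] = k := by
  have h1 : magnus n R (FreeGroup.of i) [i] = 1 := by simp [magnus_of, oneAddX_apply]
  induction k using Int.induction_on with
  | zero => simp [one_def]
  | succ k ih => rw [zpow_add_one, magnus_mul_apply_singleton, ih, h1]; push_cast; ring
  | pred k ih =>
    rw [← sub_add_cancel (-(k : ℤ)) 1, zpow_add_one, magnus_mul_apply_singleton, h1] at ih
    push_cast at ih ⊢
    linear_combination ih

theorem isSeriesIn_magnus_zpow_of (i : Fin n) (k : ℤ) :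
    IsSeriesIn i (magnus n R (FreeGroup.of i ^ k)) := by
  induction k using Int.induction_on with
  | zero => simpa using isSeriesIn_one i
  | succ k ih => rw [zpow_add_one, map_mul, magnus_of]; exact ih.mul (isSeriesIn_one_add_X i)
  | pred k ih => rw [zpow_sub_one, map_mul, magnus_of_inv]; exact ih.mul (isSeriesIn_geom i)

open Monoid in
theorem magnus_word_prod_apply (w : CoprodI.Word fun _ : Fin n => FreeGroup Unit) :
    magnus n R (freeGroupEquivCoprodI.symm w.prod) (w.toList.map Sigma.fst) =
      (w.toList.map fun l => (FreeGroup.equivIntOfUnique l.2 : R)).prod := by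
  rw [freeGroupEquivCoprodI_symm_word_prod, map_list_prod]
  simp only [List.map_map, Function.comp_def]
  rw [list_prod_apply_map w.toList Sigma.fst _ (fun l _ => isSeriesIn_magnus_zpow_of _ _)
      ((List.isChain_map _).2 w.chain_ne)]
  simp [magnus_zpow_of_apply_singleton]

open Monoid in
theorem magnus_injective [IsDomain R] [CharZero R] : Function.Injective (magnus n R) := by
  suffices h : ∀ x, magnus n R x = 1 → x = 1 by
    intro a b hab
    rw [← mul_inv_eq_one]
    apply h
    rw [map_mul, hab, ← map_mul, mul_inv_cancel, map_one]
  intro x hx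
  have hxw :
      freeGroupEquivCoprodI.symm (CoprodI.Word.equiv (freeGroupEquivCoprodI x)).prod = x :=
    (congrArg _ (CoprodI.Word.equiv.symm_apply_apply _)).trans (MulEquiv.symm_apply_apply _ _)
  generalize CoprodI.Word.equiv (freeGroupEquivCoprodI x) = w at hxw
  subst hxw
  by_contra hne
  have hw : w.toList ≠ [] := fun h => hne (by simp [CoprodI.Word.prod, h])
  have hcoeff := magnus_word_prod_apply (R := R) w
  rw [hx, one_def, if_neg (by simpa using hw)] at hcoeff
  refine List.prod_ne_zero ?_ hcoeff.symm
  simp only [List.mem_map, not_exists, not_and]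
  intro l hl h0
  exact FreeGroup.equivIntOfUnique_ne_zero (w.ne_one l hl) (Int.cast_eq_zero.1 h0)

theorem magnusLt_iff {a b : FreeGroup (Fin n)} :
    magnusLt a b ↔ Pi.Lex NCDegLex (· < ·) (magnus n ℤ a) (magnus n ℤ b) :=
  exists_congr fun _ => and_comm

end Magnus

/-- The Magnus ordering is a bi-invariant total order on the
free group `Fₙ`. -/
theorem magnusOrdering_is_biordering (n : ℕ) :
    IsBiOrdering (magnusLt (n := n)) := by
  have : IsStrictTotalOrder (NCSeries n ℤ) (Pi.Lex NCDegLex (· < ·)) :=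
    Pi.isStrictTotalOrder_lex wellFounded_ncDegLex
  have hlex : magnusLt (n := n) = Function.onFun (Pi.Lex NCDegLex (· < ·)) (magnus n ℤ) := by
    ext a b
    exact magnusLt_iff
  have hpos (c : FreeGroup (Fin n)) : 0 < magnus n ℤ c [] := by
    rw [magnus_apply_nil]
    exact one_pos
  refine ⟨hlex ▸ magnus_injective.isStrictTotalOrder_onFun _, fun a b c hab => ⟨?_, ?_⟩⟩
  · rw [magnusLt_iff, map_mul, map_mul]
    exact NCSeries.lex_mul_left (hpos c) (magnusLt_iff.1 hab)
  · rw [magnusLt_iff, map_mul, map_mul]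
    exact NCSeries.lex_mul_right (hpos c) (magnusLt_iff.1 hab)
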